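/- If constants P^{γαβ} satisfy the null condition, then for Φ = (1, -x₁/t, -x₂/t) on the cone K = {t ≥ |x| + 1} one has |P^{γαβ} Φ_γ Φ_α Φ_β| ≤ C·s²/t², where s² = t² - |x|² and C depends only on the P^{γαβ}. -/

import Mathlib

/-- The null condition for constants `P^{γαβ}` in two space dimensions. -/
def NullCond (P : Fin 3 → Fin 3 → Fin 3 → ℝ) : Prop :=
  ∀ ξ : Fin 3 → ℝ, ξ 0 ^ 2 = ξ 1 ^ 2 + ξ 2 ^ 2 →
    ∑ γ : Fin 3, ∑ α : Fin 3, ∑ β : Fin 3, P γ α β * ξ γ * ξ α * ξ β = 0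

/-!
The vector `ξ = (r/t, -x₁/t, -x₂/t)` is null and differs from `Φ = (1, -x₁/t, -x₂/t)` only in
its time component, by `1 - r/t`. Both lie in the unit ball of the sup norm, where a cubic form
is Lipschitz with constant `3 ∑ |P^{γαβ}|`; since the form vanishes at `ξ`, its value at `Φ` is
at most `3 ∑ |P^{γαβ}| (1 - r/t)`, and `1 - r/t ≤ 1 - (r/t)² = s²/t²` because `r ≤ t`.
-/

open Finset

section CubicForm

variable {ι : Type*} [Fintype ι]

def cubicForm (P : ι → ι → ι → ℝ) (ξ : ι → ℝ) : ℝ :=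
  ∑ γ, ∑ α, ∑ β, P γ α β * ξ γ * ξ α * ξ β

lemma abs_mul_mul_sub_mul_mul_le {a b c a' b' c' : ℝ} (ha' : |a'| ≤ 1) (hb : |b| ≤ 1)
    (hb' : |b'| ≤ 1) (hc : |c| ≤ 1) :
    |a * b * c - a' * b' * c'| ≤ |a - a'| + |b - b'| + |c - c'| := by
  have hsplit : a * b * c - a' * b' * c'
      = (a - a') * (b * c) + a' * ((b - b') * c) + a' * b' * (c - c') := by ring
  rw [hsplit]
  refine (abs_add_three _ _ _).trans ?_
  simp only [abs_mul]
  gcongr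
  · exact mul_le_of_le_one_right (abs_nonneg _) (mul_le_one₀ hb (abs_nonneg _) hc)
  · exact mul_le_of_le_one_left (by positivity) ha' |>.trans
      (mul_le_of_le_one_right (abs_nonneg _) hc)
  · exact mul_le_of_le_one_left (abs_nonneg _) (mul_le_one₀ ha' (abs_nonneg _) hb')

lemma abs_mul_mul_sub_mul_mul_le_norm {ξ η : ι → ℝ} (hξ : ‖ξ‖ ≤ 1) (hη : ‖η‖ ≤ 1) (γ α β : ι) :
    |ξ γ * ξ α * ξ β - η γ * η α * η β| ≤ 3 * ‖ξ - η‖ := by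
  have hcoord (v : ι → ℝ) (i : ι) : |v i| ≤ ‖v‖ := by
    simpa only [Real.norm_eq_abs] using norm_le_pi_norm v i
  have hprod := abs_mul_mul_sub_mul_mul_le (a := ξ γ) (c' := η β) ((hcoord η γ).trans hη)
    ((hcoord ξ α).trans hξ) ((hcoord η α).trans hη) ((hcoord ξ β).trans hξ)
  have hdiff (i : ι) : |ξ i - η i| ≤ ‖ξ - η‖ := hcoord (ξ - η) i
  linarith [hdiff γ, hdiff α, hdiff β]

lemma abs_cubicForm_sub_le (P : ι → ι → ι → ℝ) {ξ η : ι → ℝ} (hξ : ‖ξ‖ ≤ 1) (hη : ‖η‖ ≤ 1) :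
    |cubicForm P ξ - cubicForm P η| ≤ 3 * (∑ γ, ∑ α, ∑ β, |P γ α β|) * ‖ξ - η‖ := by
  have hdiff : cubicForm P ξ - cubicForm P η
      = ∑ γ, ∑ α, ∑ β, P γ α β * (ξ γ * ξ α * ξ β - η γ * η α * η β) := by
    simp only [cubicForm, ← sum_sub_distrib]
    ring_nf
  rw [hdiff, mul_comm 3, mul_assoc, sum_mul]
  refine (abs_sum_le_sum_abs _ _).trans (sum_le_sum fun γ _ => ?_)
  rw [sum_mul]
  refine (abs_sum_le_sum_abs _ _).trans (sum_le_sum fun α _ => ?_)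
  rw [sum_mul]
  refine (abs_sum_le_sum_abs _ _).trans (sum_le_sum fun β _ => ?_)
  rw [abs_mul]
  exact mul_le_mul_of_nonneg_left (abs_mul_mul_sub_mul_mul_le_norm hξ hη γ α β) (abs_nonneg _)

end CubicForm

lemma one_sub_div_le_sq_sub_sq_div_sq {r t : ℝ} (hr : 0 ≤ r) (hrt : r ≤ t) (ht : 0 < t) :
    1 - r / t ≤ (t ^ 2 - r ^ 2) / t ^ 2 := by
  have hu : (t ^ 2 - r ^ 2) / t ^ 2 = 1 - (r / t) ^ 2 := by field_simp
  have hu0 : 0 ≤ r / t := div_nonneg hr ht.le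
  have hu1 : r / t ≤ 1 := (div_le_one ht).2 hrt
  rw [hu]
  nlinarith

lemma norm_vecCons_neg_div_le_one {a t x1 x2 : ℝ} (ha : |a| ≤ 1) (ht : 0 < t)
    (hx : Real.sqrt (x1 ^ 2 + x2 ^ 2) ≤ t) : ‖![a, -x1 / t, -x2 / t]‖ ≤ 1 := by
  have hcoord (x : ℝ) (hx' : x ^ 2 ≤ x1 ^ 2 + x2 ^ 2) : |-x / t| ≤ 1 := by
    rw [abs_div, abs_neg, abs_of_pos ht, div_le_one ht]
    exact (Real.abs_le_sqrt hx').trans hx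
  simp [pi_norm_le_iff_of_nonneg, Fin.forall_fin_succ, ha, hcoord x1 (by nlinarith),
    hcoord x2 (by nlinarith)]

lemma norm_vecCons_sub_vecCons_le {a b v w : ℝ} : ‖![a, v, w] - ![b, v, w]‖ ≤ |a - b| := by
  simp [pi_norm_le_iff_of_nonneg, Fin.forall_fin_succ]

/-- if `P` is null, then on the cone `K = {t ≥ |x|+1}`, with
`Φ = (1, -x₁/t, -x₂/t)` and `s² = t² - |x|²`, one has
`|P^{γαβ} Φ_γ Φ_α Φ_β| ≤ C s²/t²`. -/
theorem stmt3 (P : Fin 3 → Fin 3 → Fin 3 → ℝ) (hP : NullCond P) :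
    ∃ C > (0 : ℝ), ∀ t x1 x2 : ℝ, Real.sqrt (x1 ^ 2 + x2 ^ 2) + 1 ≤ t →
      |∑ γ : Fin 3, ∑ α : Fin 3, ∑ β : Fin 3,
          P γ α β * (![1, -x1 / t, -x2 / t] γ)
            * (![1, -x1 / t, -x2 / t] α) * (![1, -x1 / t, -x2 / t] β)|
        ≤ C * ((t ^ 2 - x1 ^ 2 - x2 ^ 2) / t ^ 2) := by
  set Q := ∑ γ, ∑ α, ∑ β, |P γ α β|
  have hQ : 0 ≤ Q := by positivity
  refine ⟨3 * Q + 1, by positivity, fun t x1 x2 hK => ?_⟩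
  set r := Real.sqrt (x1 ^ 2 + x2 ^ 2)
  have hr : 0 ≤ r := Real.sqrt_nonneg _
  have ht : 0 < t := by linarith
  have hr2 : r ^ 2 = x1 ^ 2 + x2 ^ 2 := Real.sq_sqrt (by positivity)
  have hu : |r / t| ≤ 1 := by
    rw [abs_div, abs_of_nonneg hr, abs_of_pos ht, div_le_one ht]
    linarith
  have hΦ : ‖![1, -x1 / t, -x2 / t]‖ ≤ 1 := norm_vecCons_neg_div_le_one (by simp) ht (by linarith)
  have hξ : ‖![r / t, -x1 / t, -x2 / t]‖ ≤ 1 := norm_vecCons_neg_div_le_one hu ht (by linarith)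
  have hnull : cubicForm P ![r / t, -x1 / t, -x2 / t] = 0 := by
    refine hP _ ?_
    show (r / t) ^ 2 = (-x1 / t) ^ 2 + (-x2 / t) ^ 2
    rw [div_pow, div_pow, div_pow, neg_sq, neg_sq, hr2, add_div]
  calc |cubicForm P ![1, -x1 / t, -x2 / t]|
      = |cubicForm P ![1, -x1 / t, -x2 / t] - cubicForm P ![r / t, -x1 / t, -x2 / t]| := by
        rw [hnull, sub_zero]
    _ ≤ 3 * Q * ‖![1, -x1 / t, -x2 / t] - ![r / t, -x1 / t, -x2 / t]‖ :=
        abs_cubicForm_sub_le P hΦ hξ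
    _ ≤ 3 * Q * (1 - r / t) := by
        grw [norm_vecCons_sub_vecCons_le, abs_of_nonneg (by linarith [(abs_le.1 hu).2])]
    _ ≤ 3 * Q * ((t ^ 2 - r ^ 2) / t ^ 2) := by
        grw [one_sub_div_le_sq_sub_sq_div_sq hr (by linarith) ht]
    _ ≤ (3 * Q + 1) * ((t ^ 2 - x1 ^ 2 - x2 ^ 2) / t ^ 2) := by
        rw [hr2, ← sub_sub]
        gcongr
        · exact div_nonneg (by nlinarith) (by positivity)
        · linarith
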